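/- arXiv:2506.22672 — 6 statements merged into one kernel-verified Lean document; each statement's English description precedes it below -/
import Mathlib

section
/- Let R be a root system of a semisimple Lie algebra with simple roots E_1,...,E_n, and let α, γ be positive roots with α - γ ∈ R and 2α + γ ∈ R. Then there is an index i such that the coefficient of E_i in 2α + γ (written in the basis of simple roots) is at least 3. -/
/-- In a root system with simple roots `E`, every root being a
nonnegative or nonpositive integer combination of the simple roots (coefficients
given by `c`), if `α, γ` are positive roots with `α - γ ∈ R` and `2α + γ ∈ R`,
then some simple-root coefficient of `2α + γ` (which equals `2 * c α i + c γ i`)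
is at least `3`. -/
theorem stmt_0 {V : Type*} [AddCommGroup V] [Module ℝ V] {n : ℕ}
    (R : Set V) (E : Fin n → V) (hE : LinearIndependent ℝ E)
    (c : V → Fin n → ℤ)
    (hrep : ∀ v ∈ R, v = ∑ i, (c v i : ℝ) • E i)
    (hzero : (0 : V) ∉ R)
    (hsign : ∀ v ∈ R, (∀ i, 0 ≤ c v i) ∨ (∀ i, c v i ≤ 0))
    (α γ : V) (hα : α ∈ R) (hγ : γ ∈ R)
    (hαpos : ∀ i, 0 ≤ c α i) (hγpos : ∀ i, 0 ≤ c γ i)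
    (hdiff : α - γ ∈ R) (hsum : (2 : ℝ) • α + γ ∈ R) :
    ∃ i, 3 ≤ c ((2 : ℝ) • α + γ) i := by
  -- uniqueness of integer coefficients
  have key : ∀ (a b : Fin n → ℤ),
      (∑ i, (a i : ℝ) • E i) = (∑ i, (b i : ℝ) • E i) → ∀ i, a i = b i := by
    intro a b hab i
    have h0 : ∑ i, ((a i : ℝ) - (b i : ℝ)) • E i = 0 := by
      simp [sub_smul, Finset.sum_sub_distrib, hab]
    have := Fintype.linearIndependent_iff.mp hE (fun i => (a i : ℝ) - (b i : ℝ)) h0 i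
    exact_mod_cast sub_eq_zero.mp this
  -- coefficients of 2α+γ
  have hsumc : ∀ i, c ((2 : ℝ) • α + γ) i = 2 * c α i + c γ i := by
    have h1 : (2 : ℝ) • α + γ = ∑ i, ((2 * c α i + c γ i : ℤ) : ℝ) • E i := by
      conv_lhs => rw [hrep α hα, hrep γ hγ]
      rw [Finset.smul_sum, ← Finset.sum_add_distrib]
      refine Finset.sum_congr rfl fun i _ => ?_
      push_cast
      rw [add_smul, smul_smul]
    intro i
    exact key _ _ ((hrep _ hsum).symm.trans h1) i
  -- coefficients of α−γ
  have hdiffc : ∀ i, c (α - γ) i = c α i - c γ i := by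
    have h1 : α - γ = ∑ i, ((c α i - c γ i : ℤ) : ℝ) • E i := by
      conv_lhs => rw [hrep α hα, hrep γ hγ]
      rw [← Finset.sum_sub_distrib]
      refine Finset.sum_congr rfl fun i _ => ?_
      push_cast
      rw [sub_smul]
    intro i
    exact key _ _ ((hrep _ hdiff).symm.trans h1) i
  -- a root has a nonzero coefficient
  have hne : ∀ v ∈ R, ∃ i, c v i ≠ 0 := by
    intro v hv
    by_contra h
    push_neg at h
    apply hzero
    have : v = 0 := by
      rw [hrep v hv]
      simp [h]
    rwa [← this]
  rcases hsign _ hdiff with h | h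
  · -- γ ≤ α componentwise
    obtain ⟨i, hi⟩ := hne γ hγ
    have hγi : 1 ≤ c γ i := lt_of_le_of_ne (hγpos i) (Ne.symm hi)
    have hαi : c γ i ≤ c α i := by have := h i; rw [hdiffc i] at this; omega
    exact ⟨i, by rw [hsumc i]; omega⟩
  · -- α ≤ γ componentwise
    obtain ⟨i, hi⟩ := hne α hα
    have hαi : 1 ≤ c α i := lt_of_le_of_ne (hαpos i) (Ne.symm hi)
    have hγi : c α i ≤ c γ i := by have := h i; rw [hdiffc i] at this; omega
    exact ⟨i, by rw [hsumc i]; omega⟩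
end

section
/- In a reduced root system, if α and γ are roots with α - γ a root and 2α + γ a root, then α and γ share a common simple root: choosing simple roots so that α and γ are both positive, there exists an index i with both simple-root coefficients a_i of α and b_i of γ nonzero. -/
/-- In a reduced root system with simple roots `E` and coefficient
function `c`, if `α, γ` are positive roots (all simple-root coefficients
nonnegative) with `α - γ` a root and `2α + γ` a root, then `α` and `γ` share a
common simple root: some index `i` has both `c α i ≠ 0` and `c γ i ≠ 0`. -/
theorem stmt_1 {V : Type*} [AddCommGroup V] [Module ℝ V] {n : ℕ}
    (R : Set V) (E : Fin n → V) (hE : LinearIndependent ℝ E)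
    (c : V → Fin n → ℤ)
    (hrep : ∀ v ∈ R, v = ∑ i, (c v i : ℝ) • E i)
    (hzero : (0 : V) ∉ R)
    (hsign : ∀ v ∈ R, (∀ i, 0 ≤ c v i) ∨ (∀ i, c v i ≤ 0))
    (α γ : V) (hα : α ∈ R) (hγ : γ ∈ R)
    (hαpos : ∀ i, 0 ≤ c α i) (hγpos : ∀ i, 0 ≤ c γ i)
    (hdiff : α - γ ∈ R) (hsum : (2 : ℝ) • α + γ ∈ R) :
    ∃ i, c α i ≠ 0 ∧ c γ i ≠ 0 := by
  by_contra h
  push_neg at h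
  -- h : ∀ i, c α i ≠ 0 → c γ i = 0
  have key : ∀ i, (c (α - γ) i : ℝ) = (c α i : ℝ) - c γ i := by
    have hsum0 : ∑ i, ((c (α - γ) i : ℝ) - ((c α i : ℝ) - c γ i)) • E i = 0 := by
      have := hrep _ hdiff
      have hα' := hrep _ hα
      have hγ' := hrep _ hγ
      simp only [sub_smul, Finset.sum_sub_distrib]
      rw [← hα', ← hγ', ← this]
      abel
    intro i
    have := Fintype.linearIndependent_iff.mp hE _ hsum0 i
    linarith [this]
  rcases hsign _ hdiff with hpos | hneg
  · -- then c γ = 0 everywhere, so γ = 0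
    have hγ0 : ∀ i, c γ i = 0 := by
      intro i
      by_contra hne
      have hαi : c α i = 0 := by
        by_contra hane
        exact hne (h i hane)
      have h1 : (0:ℝ) ≤ c (α - γ) i := by exact_mod_cast hpos i
      have h2 : (c (α - γ) i : ℝ) = -(c γ i) := by rw [key i, hαi]; push_cast; ring
      have h3 : (0:ℤ) < c γ i := lt_of_le_of_ne (hγpos i) (Ne.symm hne)
      have : (0:ℝ) < c γ i := by exact_mod_cast h3
      rw [h2] at h1; linarith
    have : γ = 0 := by
      rw [hrep _ hγ]
      simp [hγ0]
    exact hzero (this ▸ hγ)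
  · -- then c α = 0 everywhere, so α = 0
    have hα0 : ∀ i, c α i = 0 := by
      intro i
      by_contra hne
      have hγi : c γ i = 0 := h i hne
      have h1 : c (α - γ) i ≤ 0 := hneg i
      have h2 : (c (α - γ) i : ℝ) = c α i := by rw [key i, hγi]; push_cast; ring
      have h3 : (0:ℤ) < c α i := lt_of_le_of_ne (hαpos i) (Ne.symm hne)
      have h1' : (c (α - γ) i : ℝ) ≤ 0 := by exact_mod_cast h1
      have : (0:ℝ) < c α i := by exact_mod_cast h3
      rw [h2] at h1'; linarith
    have : α = 0 := by
      rw [hrep _ hα]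
      simp [hα0]
    exact hzero (this ▸ hα)
end

section
/- Let t > 1 and n ≥ 2. The (2n-1)×(2n-1) real symmetric matrix R^t whose entries are: diagonal entries 1 for i ≤ 2n-2 and 2t at position (2n-1, 2n-1); entries 1 - 1/t at positions (2i-1, 2i) and (2i, 2i-1) for 1 ≤ i ≤ n-1; entries 1 in the last row and column (off the corner); and 1/2 at all remaining off-diagonal positions — is invertible. -/
/-!
`R^t = D + ½ v vᵀ` with `v = (1, …, 1, 2)`, where `D` is block diagonal with `2 × 2` blocks
`[[1/2, 1/2 - 1/t], [1/2 - 1/t, 1/2]]` and corner entry `2t - 2`. For `t > 1` the matrix `D`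
is strictly diagonally dominant with positive diagonal, hence positive definite by Gershgorin's
theorem; adding the positive semidefinite `½ v vᵀ` keeps it positive definite, so `R^t` is
invertible.
-/

/-- The `(2n-1)×(2n-1)` matrix `R^t` (0-indexed): diagonal entries `1`, except
the last one which is `2t`; entries `1 - 1/t` at the pair positions
`(2i-2, 2i-1)` and `(2i-1, 2i-2)` (0-indexed, i.e. `(2i-1, 2i)` 1-indexed);
entries `1` on the last row and column off the corner; and `1/2` at all
remaining off-diagonal positions. -/
noncomputable def Rt (n : ℕ) (t : ℝ) : Matrix (Fin (2*n-1)) (Fin (2*n-1)) ℝ :=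
  Matrix.of fun j k =>
    if j = k then (if (j : ℕ) = 2*n-2 then 2*t else 1)
    else if (j : ℕ) = 2*n-2 ∨ (k : ℕ) = 2*n-2 then 1
    else if (j : ℕ) / 2 = (k : ℕ) / 2 then 1 - 1/t
    else 1/2

open Finset Matrix

theorem Matrix.IsSymm.posDef_of_sum_abs_lt_diag {n : Type*} [Fintype n] [DecidableEq n]
    {A : Matrix n n ℝ} (hA : A.IsSymm) (h : ∀ k, ∑ j ∈ univ.erase k, |A k j| < A k k) :
    A.PosDef := by
  have hH : A.IsHermitian := hA
  refine hH.posDef_iff_eigenvalues_pos.mpr fun i => ?_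
  have hμ : Module.End.HasEigenvalue A.toLin' (hH.eigenvalues i) := by
    rw [Module.End.hasEigenvalue_iff_mem_spectrum, spectrum_toLin']
    exact hH.eigenvalues_mem_spectrum_real i
  obtain ⟨k, hk⟩ := eigenvalue_mem_ball hμ
  rw [Metric.mem_closedBall, Real.dist_eq] at hk
  simp only [Real.norm_eq_abs] at hk
  linarith [neg_abs_le (hH.eigenvalues i - A k k), h k]

noncomputable def RtBlock (n : ℕ) (t : ℝ) : Matrix (Fin (2*n-1)) (Fin (2*n-1)) ℝ :=
  Matrix.of fun j k =>
    if j = k then (if (j : ℕ) = 2*n-2 then 2*t - 2 else 1/2)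
    else if (j : ℕ) = 2*n-2 ∨ (k : ℕ) = 2*n-2 then 0
    else if (j : ℕ) / 2 = (k : ℕ) / 2 then 1/2 - 1/t
    else 0

def RtVec (n : ℕ) : Fin (2*n-1) → ℝ := fun j => if (j : ℕ) = 2*n-2 then 2 else 1

theorem Rt_eq_RtBlock_add (n : ℕ) (t : ℝ) :
    Rt n t = RtBlock n t + (1/2 : ℝ) • vecMulVec (RtVec n) (RtVec n) := by
  ext j k
  simp only [Rt, RtBlock, RtVec, of_apply, Matrix.add_apply, Matrix.smul_apply,
    vecMulVec_apply, smul_eq_mul]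
  by_cases hjk : j = k
  · subst hjk
    simp only [if_true]
    split_ifs <;> ring
  · have : (j : ℕ) ≠ k := Fin.val_ne_of_ne hjk
    simp only [if_neg hjk]
    split_ifs <;> first | (exfalso; omega) | ring

theorem RtBlock_isSymm (n : ℕ) (t : ℝ) : (RtBlock n t).IsSymm := by
  ext j k
  simp only [transpose_apply, RtBlock, of_apply]
  by_cases hjk : j = k
  · subst hjk; rfl
  · have : (j : ℕ) ≠ k := Fin.val_ne_of_ne hjk
    split_ifs <;> first | rfl | omega

theorem sum_abs_RtBlock_lt_diag (n : ℕ) {t : ℝ} (ht : 1 < t) (k : Fin (2*n-1)) :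
    ∑ j ∈ univ.erase k, |RtBlock n t k j| < RtBlock n t k k := by
  by_cases hk : (k : ℕ) = 2*n-2
  · have hzero : ∀ j ∈ univ.erase k, |RtBlock n t k j| = 0 := fun j hj => by
      simp [RtBlock, (ne_of_mem_erase hj).symm, hk]
    rw [sum_eq_zero hzero]
    simp only [RtBlock, of_apply, if_pos hk, if_true]
    linarith
  have hdiag : RtBlock n t k k = 1/2 := by simp [RtBlock, hk]
  have hc : |(1:ℝ)/2 - 1/t| < 1/2 := by
    have : 0 < 1/t := by positivity
    have : 1/t < 1 := by rw [div_lt_one] <;> linarith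
    rw [abs_lt]; constructor <;> linarith
  have hpartner : ((univ.erase k).filter fun j : Fin (2*n-1) => (j : ℕ) / 2 = k / 2).card ≤ 1 := by
    refine card_le_one.mpr fun a ha b hb => ?_
    simp only [mem_filter, mem_erase] at ha hb
    have := Fin.val_ne_of_ne ha.1.1
    have := Fin.val_ne_of_ne hb.1.1
    exact Fin.ext (by omega)
  calc ∑ j ∈ univ.erase k, |RtBlock n t k j|
      ≤ ∑ j ∈ univ.erase k, if (j : ℕ) / 2 = k / 2 then |(1:ℝ)/2 - 1/t| else 0 := by
        refine sum_le_sum fun j hj => ?_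
        have := (ne_of_mem_erase hj).symm
        rw [RtBlock, of_apply, if_neg this]
        split_ifs <;> first | (exfalso; omega) | simp
    _ = |(1:ℝ)/2 - 1/t| * ((univ.erase k).filter fun j : Fin (2*n-1) => (j : ℕ) / 2 = k / 2).card := by
        rw [sum_ite, sum_const_zero, add_zero, sum_const, nsmul_eq_mul, mul_comm]
    _ ≤ |(1:ℝ)/2 - 1/t| * 1 := by gcongr; exact_mod_cast hpartner
    _ < RtBlock n t k k := by rw [hdiag]; linarith

theorem stmt_9_general (n : ℕ) (t : ℝ) (ht : 1 < t) :
    IsUnit (Rt n t) := by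
  have hBlock : (RtBlock n t).PosDef :=
    (RtBlock_isSymm n t).posDef_of_sum_abs_lt_diag (sum_abs_RtBlock_lt_diag n ht)
  have hRankOne : ((1/2 : ℝ) • vecMulVec (RtVec n) (RtVec n)).PosSemidef :=
    (posSemidef_vecMulVec_self_star (RtVec n)).smul (by norm_num)
  rw [Rt_eq_RtBlock_add]
  exact (hBlock.add_posSemidef hRankOne).isUnit

/-- for `t > 1` and `n ≥ 2`, the matrix `R^t` is invertible. -/
theorem stmt_9 (n : ℕ) (hn : 2 ≤ n) (t : ℝ) (ht : 1 < t) :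
    IsUnit (Rt n t) :=
  stmt_9_general n t ht
end

section
/- Let t > 1 and consider the matrix R^t above. If a_1,...,a_{2n-1} are complex numbers with Σ_k a_k (R^t)_{jk} = 0 for all j, then from the rows 2i-1 and 2i one deduces a_{2i-1} = a_{2i} for all 1 ≤ i ≤ n-1, hence all a_1 = ... = a_{2n-2}, and then from the last row a_1 = ... = a_{2n-1} = 0. -/
def pairn (j : ℕ) : ℕ := if j % 2 = 0 then j + 1 else j - 1

lemma pairn_lt {n j : ℕ} (hj : j < 2*n-2) : pairn j < 2*n-2 := by
  unfold pairn; split <;> omega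

lemma pairn_pairn (j : ℕ) : pairn (pairn j) = j := by
  unfold pairn; split_ifs <;> omega

lemma Rt_row {n : ℕ} {t : ℝ} (ht0 : t ≠ 0) (j k : Fin (2*n-1))
    (hj : (j:ℕ) < 2*n-2) :
    2*t*Rt n t j k =
      t + (if (k:ℕ) = (j:ℕ) then t else 0) + (if (k:ℕ) = pairn (j:ℕ) then t - 2 else 0)
        + (if (k:ℕ) = 2*n-2 then t else 0) := by
  have hk := k.isLt
  rcases j with ⟨j, hj'⟩
  rcases k with ⟨k, hk'⟩
  simp only [Rt, Matrix.of_apply, Fin.mk.injEq, pairn] at *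
  split_ifs <;> first | omega | ring1 | (field_simp; ring1)

lemma Rt_rowC {n : ℕ} {t : ℝ} (ht0 : t ≠ 0) (j k pj Lf : Fin (2*n-1))
    (hj : (j:ℕ) < 2*n-2) (hpj : (pj:ℕ) = pairn (j:ℕ)) (hLf : (Lf:ℕ) = 2*n-2) :
    ((2*t*Rt n t j k : ℝ) : ℂ) =
      (t:ℂ) + (if k = j then (t:ℂ) else 0) + (if k = pj then (t:ℂ) - 2 else 0)
        + (if k = Lf then (t:ℂ) else 0) := by
  have h1 : (k = j) ↔ ((k:ℕ) = (j:ℕ)) := Fin.ext_iff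
  have h2 : (k = pj) ↔ ((k:ℕ) = pairn (j:ℕ)) := by rw [Fin.ext_iff, hpj]
  have h3 : (k = Lf) ↔ ((k:ℕ) = 2*n-2) := by rw [Fin.ext_iff, hLf]
  rw [Rt_row ht0 j k hj]
  simp only [h1, h2, h3]
  split_ifs <;> push_cast <;> ring

lemma Rt_lastC {n : ℕ} (t : ℝ) (j k Lf : Fin (2*n-1))
    (hj : (j:ℕ) = 2*n-2) (hLf : (Lf:ℕ) = 2*n-2) :
    ((Rt n t j k : ℝ) : ℂ) = 1 + (if k = Lf then 2*(t:ℂ) - 1 else 0) := by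
  have hk := k.isLt
  have hkL : (k = Lf) ↔ ((k:ℕ) = 2*n-2) := by rw [Fin.ext_iff, hLf]
  simp only [hkL]
  rcases j with ⟨j, hj'⟩; rcases k with ⟨k, hk'⟩
  simp only [Rt, Matrix.of_apply, Fin.mk.injEq] at *
  split_ifs <;> first | omega | (push_cast; ring1) | norm_num

lemma sum_mul_ite {N : ℕ} (a : Fin N → ℂ) (b : Fin N) (v : ℂ) :
    (∑ k : Fin N, a k * (if k = b then v else 0)) = a b * v := by
  rw [Finset.sum_eq_single b]
  · simp
  · intro c _ hc; simp [hc]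
  · intro h; exact absurd (Finset.mem_univ b) h

/-- for `t > 1`, if complex numbers `a_1, …, a_{2n-1}` satisfy
`∑ₖ aₖ (R^t)_{jk} = 0` for all rows `j`, then the first `2n-2` of them are all
equal (in particular `a_{2i-1} = a_{2i}`) and in fact all of them vanish. -/
theorem stmt_10 (n : ℕ) (hn : 2 ≤ n) (t : ℝ) (ht : 1 < t)
    (a : Fin (2*n-1) → ℂ)
    (ha : ∀ j : Fin (2*n-1), ∑ k : Fin (2*n-1), a k * ((Rt n t j k : ℝ) : ℂ) = 0) :
    (∀ l m : Fin (2*n-1), (l : ℕ) < 2*n-2 → (m : ℕ) < 2*n-2 → a l = a m) ∧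
    (∀ k : Fin (2*n-1), a k = 0) := by
  have ht0 : t ≠ 0 := by linarith
  have htC : (t:ℂ) ≠ 0 := by exact_mod_cast ht0
  have hL : 2*n-2 < 2*n-1 := by omega
  have h0 : 0 < 2*n-1 := by omega
  set S := ∑ k : Fin (2*n-1), a k with hSdef
  -- multiplied system
  have ha2 : ∀ j : Fin (2*n-1), ∑ k : Fin (2*n-1), a k * ((2*t*Rt n t j k : ℝ) : ℂ) = 0 := by
    intro j
    have hh : ∑ k : Fin (2*n-1), a k * ((2*t*Rt n t j k : ℝ) : ℂ)
        = (2*(t:ℂ)) * ∑ k : Fin (2*n-1), a k * ((Rt n t j k : ℝ) : ℂ) := by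
      rw [Finset.mul_sum]
      exact Finset.sum_congr rfl fun k _ => by push_cast; ring
    rw [hh, ha j, mul_zero]
  -- row equations for j < 2n-2
  have E : ∀ (j pj : Fin (2*n-1)), (j:ℕ) < 2*n-2 → (pj:ℕ) = pairn (j:ℕ) →
      (t:ℂ)*S + (t:ℂ)*a j + ((t:ℂ)-2)*a pj + (t:ℂ)*a ⟨2*n-2, hL⟩ = 0 := by
    intro j pj hj hpj
    have h := ha2 j
    rw [Finset.sum_congr rfl
      (fun k _ => by rw [Rt_rowC ht0 j k pj ⟨2*n-2, hL⟩ hj hpj rfl])] at h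
    simp only [mul_add] at h
    rw [Finset.sum_add_distrib, Finset.sum_add_distrib, Finset.sum_add_distrib,
      sum_mul_ite, sum_mul_ite, sum_mul_ite, ← Finset.sum_mul, ← hSdef] at h
    linear_combination h
  -- pair equality
  have pairEq : ∀ (j pj : Fin (2*n-1)), (j:ℕ) < 2*n-2 → (pj:ℕ) = pairn (j:ℕ) →
      a j = a pj := by
    intro j pj hj hpj
    have hpj2 : (pj:ℕ) < 2*n-2 := by rw [hpj]; exact pairn_lt hj
    have h1 := E j pj hj hpj
    have h2 := E pj j hpj2 (by rw [hpj, pairn_pairn])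
    linear_combination (h1 - h2)/2
  -- all first 2n-2 equal
  have allEq : ∀ l m : Fin (2*n-1), (l : ℕ) < 2*n-2 → (m : ℕ) < 2*n-2 → a l = a m := by
    intro l m hl hm
    have hpl : pairn (l:ℕ) < 2*n-1 := lt_trans (pairn_lt hl) hL
    have hpm : pairn (m:ℕ) < 2*n-1 := lt_trans (pairn_lt hm) hL
    have h1 := E l ⟨pairn (l:ℕ), hpl⟩ hl rfl
    have h2 := E m ⟨pairn (m:ℕ), hpm⟩ hm rfl
    rw [← pairEq l ⟨pairn (l:ℕ), hpl⟩ hl rfl] at h1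
    rw [← pairEq m ⟨pairn (m:ℕ), hpm⟩ hm rfl] at h2
    have hco : (2*(t:ℂ)-2) ≠ 0 := by
      have : ((2*t-2 : ℝ):ℂ) ≠ 0 := Complex.ofReal_ne_zero.mpr (by linarith)
      push_cast at this
      convert this using 1 <;> try ring
    have h3 : (2*(t:ℂ)-2) * (a l - a m) = 0 := by linear_combination h1 - h2
    have := (mul_eq_zero.mp h3).resolve_left hco
    exact sub_eq_zero.mp this
  refine ⟨allEq, ?_⟩
  -- notation
  have h02 : ((⟨0, h0⟩ : Fin (2*n-1)) : ℕ) < 2*n-2 := by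
    show (0:ℕ) < 2*n-2; omega
  -- S in terms of c and aL
  have hC : S = (2*(n:ℂ)-2) * a ⟨0, h0⟩ + a ⟨2*n-2, hL⟩ := by
    have hptw : ∀ k : Fin (2*n-1),
        a k = a ⟨0, h0⟩ + (if k = ⟨2*n-2, hL⟩ then a ⟨2*n-2, hL⟩ - a ⟨0, h0⟩ else 0) := by
      intro k
      by_cases hk : k = ⟨2*n-2, hL⟩
      · simp [hk]
      · have hk2 : (k:ℕ) < 2*n-2 := by
          have h1 := k.isLt
          have h2 : (k:ℕ) ≠ 2*n-2 := fun h => hk (Fin.ext h)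
          omega
        simp [hk, allEq k ⟨0, h0⟩ hk2 h02]
    rw [hSdef, Finset.sum_congr rfl fun k _ => hptw k, Finset.sum_add_distrib,
      Finset.sum_const, Finset.card_univ, Fintype.card_fin]
    have hsum2 : (∑ k : Fin (2*n-1),
        (if k = (⟨2*n-2, hL⟩ : Fin (2*n-1)) then a ⟨2*n-2, hL⟩ - a ⟨0, h0⟩ else 0))
        = a ⟨2*n-2, hL⟩ - a ⟨0, h0⟩ := by
      rw [Finset.sum_ite_eq' Finset.univ]
      simp
    rw [hsum2, nsmul_eq_mul]
    have hcast : ((2*n-1 : ℕ) : ℂ) = 2*(n:ℂ) - 1 := by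
      rw [Nat.cast_sub (by omega)]; push_cast; ring
    rw [hcast]; ring
  -- last row
  have Elast : S + (2*(t:ℂ)-1) * a ⟨2*n-2, hL⟩ = 0 := by
    have h := ha ⟨2*n-2, hL⟩
    rw [Finset.sum_congr rfl
      (fun k _ => by rw [Rt_lastC t ⟨2*n-2, hL⟩ k ⟨2*n-2, hL⟩ rfl rfl])] at h
    simp only [mul_add, mul_one] at h
    rw [Finset.sum_add_distrib, sum_mul_ite, ← hSdef] at h
    linear_combination h
  -- first row
  have h1v : 1 < 2*n-1 := by omega
  have hA := E ⟨0, h0⟩ ⟨1, h1v⟩ h02 (by show (1:ℕ) = pairn 0; simp [pairn])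
  rw [← pairEq ⟨0, h0⟩ ⟨1, h1v⟩ h02 (by show (1:ℕ) = pairn 0; simp [pairn])] at hA
  -- solve
  have hcta : a ⟨0, h0⟩ = (t:ℂ) * a ⟨2*n-2, hL⟩ := by
    have hco : (2*(t:ℂ)-2) ≠ 0 := by
      have : ((2*t-2 : ℝ):ℂ) ≠ 0 := Complex.ofReal_ne_zero.mpr (by linarith)
      push_cast at this
      convert this using 1 <;> try ring
    have h3 : (2*(t:ℂ)-2) * (a ⟨0, h0⟩ - (t:ℂ) * a ⟨2*n-2, hL⟩) = 0 := by
      linear_combination hA - (t:ℂ) * Elast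
    have := (mul_eq_zero.mp h3).resolve_left hco
    exact sub_eq_zero.mp this
  have hnC : (n:ℂ) ≠ 0 := Nat.cast_ne_zero.mpr (by omega)
  have hfin : 2*(n:ℂ)*(t:ℂ) * a ⟨2*n-2, hL⟩ = 0 := by
    linear_combination Elast - hC - (2*(n:ℂ)-2) * hcta
  have haL : a ⟨2*n-2, hL⟩ = 0 := by
    have hnz : 2*(n:ℂ)*(t:ℂ) ≠ 0 := mul_ne_zero (mul_ne_zero two_ne_zero hnC) htC
    exact (mul_eq_zero.mp hfin).resolve_left hnz
  have hc0 : a ⟨0, h0⟩ = 0 := by rw [hcta, haL, mul_zero]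
  intro k
  by_cases hk : (k:ℕ) = 2*n-2
  · have hkk : k = ⟨2*n-2, hL⟩ := Fin.ext hk
    rw [hkk]; exact haL
  · have hk2 : (k:ℕ) < 2*n-2 := by have := k.isLt; omega
    rw [allEq k ⟨0, h0⟩ hk2 h02]; exact hc0
end

section
/- For the C_n flag manifold R_M = ±{λ_1 ± λ_j, 2λ_1} with the integrable complex structure (+,+), the Kähler condition ε_α λ_α + ε_β λ_β = ε_{α+β} λ_{α+β} for all root sums in R_M forces, up to scale, λ_{λ_1 ± λ_j} = 1 for all j and λ_{2λ_1} = 2; i.e., the invariant Kähler metric is unique up to scaling and equals (1,2). -/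
/-- `λ i` : standard basis vector of `ℝⁿ`. -/
def lam (n : ℕ) (i : Fin n) : Fin n → ℝ := Pi.single i 1

/-- For the `C_n` flag `Sp(n)/(Sp(n-1)×U(1))` with the integrable
complex structure `(+,+)` (with `ε = 1` on `R_M⁺ = {λ_1 ± λ_j, 2λ_1}` and
`ε = -1` on `-R_M⁺`), any invariant metric `met` (positive, even, constant on
the two isotropy classes) satisfying the Kähler condition
`ε_α λ_α + ε_β λ_β = ε_{α+β} λ_{α+β}` whenever `α, β, α+β ∈ R_M` is, up to
scale, the metric `(1, 2)`: `met(λ_1 ± λ_j) = c` and `met(2λ_1) = 2c` for some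
`c > 0`. -/
theorem stmt_14 (n : ℕ) (hn : 2 ≤ n) (h0 : 0 < n)
    (RM RMpp : Set (Fin n → ℝ))
    (hRM : RM = {v |
        (∃ j : Fin n, j ≠ ⟨0, h0⟩ ∧
          (v = lam n ⟨0, h0⟩ - lam n j ∨ v = lam n j - lam n ⟨0, h0⟩ ∨
           v = lam n ⟨0, h0⟩ + lam n j ∨ v = -(lam n ⟨0, h0⟩ + lam n j))) ∨
        v = (2:ℝ) • lam n ⟨0, h0⟩ ∨ v = -((2:ℝ) • lam n ⟨0, h0⟩)})
    (hpp : RMpp = {v | v = (2:ℝ) • lam n ⟨0, h0⟩ ∨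
        ∃ j : Fin n, j ≠ ⟨0, h0⟩ ∧
          (v = lam n ⟨0, h0⟩ - lam n j ∨ v = lam n ⟨0, h0⟩ + lam n j)})
    (eps : (Fin n → ℝ) → ℝ)
    (heps1 : ∀ v ∈ RMpp, eps v = 1)
    (heps2 : ∀ v ∈ RM, v ∉ RMpp → eps v = -1)
    (met : (Fin n → ℝ) → ℝ)
    (hpos : ∀ v ∈ RM, 0 < met v)
    (heven : ∀ v, met (-v) = met v)
    (hclass : ∀ j k : Fin n, j ≠ ⟨0, h0⟩ → k ≠ ⟨0, h0⟩ →
        met (lam n ⟨0, h0⟩ - lam n j) = met (lam n ⟨0, h0⟩ - lam n k) ∧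
        met (lam n ⟨0, h0⟩ - lam n j) = met (lam n ⟨0, h0⟩ + lam n k))
    (hkahler : ∀ α ∈ RM, ∀ β ∈ RM, α + β ∈ RM →
        eps α * met α + eps β * met β = eps (α + β) * met (α + β)) :
    ∃ c : ℝ, 0 < c ∧
      (∀ j : Fin n, j ≠ ⟨0, h0⟩ →
        met (lam n ⟨0, h0⟩ - lam n j) = c ∧ met (lam n ⟨0, h0⟩ + lam n j) = c) ∧
      met ((2:ℝ) • lam n ⟨0, h0⟩) = 2 * c := by
  have h1n : (1:ℕ) < n := hn
  set j1 : Fin n := ⟨1, h1n⟩ with hj1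
  have hj1ne : j1 ≠ ⟨0, h0⟩ := by
    intro h; simpa using congrArg Fin.val h
  set α := lam n ⟨0, h0⟩ - lam n j1 with hα
  set β := lam n ⟨0, h0⟩ + lam n j1 with hβ
  have hsum : α + β = (2:ℝ) • lam n ⟨0, h0⟩ := by
    funext x
    simp [hα, hβ, Pi.single_apply, lam]
    split <;> ring
  have hαRM : α ∈ RM := by
    rw [hRM]; exact Or.inl ⟨j1, hj1ne, Or.inl rfl⟩
  have hβRM : β ∈ RM := by
    rw [hRM]; exact Or.inl ⟨j1, hj1ne, Or.inr (Or.inr (Or.inl rfl))⟩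
  have hsRM : α + β ∈ RM := by
    rw [hRM, hsum]; exact Or.inr (Or.inl rfl)
  have hεα : eps α = 1 := heps1 α (by rw [hpp]; exact Or.inr ⟨j1, hj1ne, Or.inl rfl⟩)
  have hεβ : eps β = 1 := heps1 β (by rw [hpp]; exact Or.inr ⟨j1, hj1ne, Or.inr rfl⟩)
  have hεs : eps (α + β) = 1 := by
    rw [hsum]; exact heps1 _ (by rw [hpp]; exact Or.inl rfl)
  have hk := hkahler α hαRM β hβRM hsRM
  rw [hεα, hεβ, hεs, one_mul, one_mul, one_mul] at hk
  refine ⟨met α, hpos α hαRM, ?_, ?_⟩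
  · intro j hj
    have h1 := hclass j1 j hj1ne hj
    have h2 := (hclass j1 j1 hj1ne hj1ne).1
    exact ⟨h1.1.symm, h1.2.symm⟩
  · have hββ : met β = met α := ((hclass j1 j1 hj1ne hj1ne).2).symm
    rw [hsum] at hk
    rw [← hk, hββ]; ring
end

section
/- Let M(t) be the 3×3 matrix [[1, 1-1/t, 1], [1-1/t, 1, 1], [1, 1, 2t]] (the matrix R^t for n = 2, i.e. CP^3 = Sp(2)/Sp(1)×U(1)). Then M(t) is positive definite if and only if t > 1, and positive semidefinite if and only if t ≥ 1. -/
/-!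
Writing `Q` for the quadratic form of the matrix, completing squares in `a + b` and `a - b` gives
`2t · Q(a, b, c) = (a - b)² + (a + b + 2tc)² + 2(t - 1)(a + b)²`.
For `t ≥ 1` this is a sum of nonnegative terms, which vanish together only at `0` when `t > 1`.
Conversely the vector `(1, 1, -1/t)` kills the first two squares, so `2t · Q = 8(t - 1)` there.
-/

open Matrix

noncomputable def rMatrix (t : ℝ) : Matrix (Fin 3) (Fin 3) ℝ :=
  !![1, 1 - 1/t, 1; 1 - 1/t, 1, 1; 1, 1, 2*t]

lemma rMatrix_isHermitian (t : ℝ) : (rMatrix t).IsHermitian := by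
  ext i j
  fin_cases i <;> fin_cases j <;> simp [rMatrix]

lemma two_mul_dotProduct_rMatrix_mulVec {t : ℝ} (ht : t ≠ 0) (x : Fin 3 → ℝ) :
    2 * t * (star x ⬝ᵥ (rMatrix t *ᵥ x)) =
      (x 0 - x 1) ^ 2 + (x 0 + x 1 + 2 * t * x 2) ^ 2 + 2 * (t - 1) * (x 0 + x 1) ^ 2 := by
  simp [rMatrix, dotProduct, mulVec, Fin.sum_univ_three]
  field_simp
  ring

lemma two_mul_dotProduct_rMatrix_mulVec_one_one_neg_inv {t : ℝ} (ht : t ≠ 0) :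
    2 * t * (star ![1, 1, -t⁻¹] ⬝ᵥ (rMatrix t *ᵥ ![1, 1, -t⁻¹])) = 8 * (t - 1) := by
  rw [two_mul_dotProduct_rMatrix_mulVec ht]
  simp [ht]
  ring

lemma one_lt_of_rMatrix_posDef {t : ℝ} (ht : 0 < t) (h : (rMatrix t).PosDef) : 1 < t := by
  have hw : ![1, 1, -t⁻¹] ≠ (0 : Fin 3 → ℝ) := fun h0 => by simpa using congrFun h0 0
  have := (posDef_iff_dotProduct_mulVec.mp h).2 hw
  nlinarith [two_mul_dotProduct_rMatrix_mulVec_one_one_neg_inv ht.ne']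

lemma one_le_of_rMatrix_posSemidef {t : ℝ} (ht : 0 < t) (h : (rMatrix t).PosSemidef) :
    1 ≤ t := by
  have := (posSemidef_iff_dotProduct_mulVec.mp h).2 ![1, 1, -t⁻¹]
  nlinarith [two_mul_dotProduct_rMatrix_mulVec_one_one_neg_inv ht.ne']

lemma rMatrix_posSemidef {t : ℝ} (ht : 1 ≤ t) : (rMatrix t).PosSemidef := by
  refine posSemidef_iff_dotProduct_mulVec.mpr ⟨rMatrix_isHermitian t, fun x => ?_⟩
  have := two_mul_dotProduct_rMatrix_mulVec (by positivity : t ≠ 0) x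
  nlinarith [sq_nonneg (x 0 - x 1), sq_nonneg (x 0 + x 1 + 2 * t * x 2), sq_nonneg (x 0 + x 1)]

lemma rMatrix_posDef {t : ℝ} (ht : 1 < t) : (rMatrix t).PosDef := by
  have ht0 : t ≠ 0 := by positivity
  refine posDef_iff_dotProduct_mulVec.mpr ⟨rMatrix_isHermitian t, fun x hx => ?_⟩
  refine pos_of_mul_pos_right ((two_mul_dotProduct_rMatrix_mulVec ht0 x) ▸ ?_)
    (by positivity : (0 : ℝ) ≤ 2 * t)
  by_contra! hle
  have hsq := sq_nonneg (x 0 - x 1)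
  have hsq' := sq_nonneg (x 0 + x 1 + 2 * t * x 2)
  have hsum : (x 0 + x 1) ^ 2 = 0 := by nlinarith [sq_nonneg (x 0 + x 1)]
  have hdiff : (x 0 - x 1) ^ 2 = 0 := by nlinarith
  have hlast : (x 0 + x 1 + 2 * t * x 2) ^ 2 = 0 := by nlinarith
  simp only [pow_eq_zero_iff two_ne_zero] at hsum hdiff hlast
  have h0 : x 0 = 0 := by linarith
  have h1 : x 1 = 0 := by linarith
  have h2 : x 2 = 0 := by simpa [h0, h1, ht0] using hlast
  exact hx (funext fun i => by fin_cases i <;> assumption)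

/-- the matrix `R^t` for `n = 2` (i.e. `ℂP³ = Sp(2)/Sp(1)×U(1)`)
is positive definite iff `t > 1` and positive semidefinite iff `t ≥ 1`. -/
theorem stmt_19 (t : ℝ) (ht : 0 < t) :
    ((!![1, 1 - 1/t, 1; 1 - 1/t, 1, 1; 1, 1, 2*t] : Matrix (Fin 3) (Fin 3) ℝ).PosDef ↔ 1 < t) ∧
    ((!![1, 1 - 1/t, 1; 1 - 1/t, 1, 1; 1, 1, 2*t] : Matrix (Fin 3) (Fin 3) ℝ).PosSemidef ↔ 1 ≤ t) :=
  ⟨⟨one_lt_of_rMatrix_posDef ht, rMatrix_posDef⟩,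
    ⟨one_le_of_rMatrix_posSemidef ht, rMatrix_posSemidef⟩⟩
end
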